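/- Let α ∈ (0,1) and define, for complex ω, ζ ∉ {0, αc, α/c, c, 1/c}, the quantities q(ω,ζ) = ζ(ω−c)(ω−1/c)/(ω(ζ−c)(ζ−1/c)) and q̃(ω,ζ) = ω(ζ−αc)(ζ−α/c)/(ζ(ω−αc)(ω−α/c)). Then for all such ω, ζ with ω⋆, ζ⋆ ∉ {0, αc, α/c, c}: q(ω⋆, ζ⋆)·q(ω,ζ) = 1 and q̃(ω⋆, ζ⋆) = q(ω,ζ)·q̃(ω,ζ). -/

import Mathlib

open Complex

noncomputable def cc (α : ℝ) : ℝ := Real.sqrt (α / (1 - α + α ^ 2))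
noncomputable def R1 (α : ℝ) : ℝ := (1 - α) / Real.sqrt α

/-- The star operation `ζ⋆ = 1/c + R₁²/(ζ − 1/c)`. -/
noncomputable def star (α : ℝ) (ζ : ℂ) : ℂ :=
  1 / (cc α : ℂ) + ((R1 α : ℝ) : ℂ) ^ 2 / (ζ - 1 / (cc α : ℂ))

/-- The function `q(ω, ζ)` from equation (6.2) of the paper. -/
noncomputable def qfun (α : ℝ) (ω ζ : ℂ) : ℂ :=
  ζ * (ω - (cc α : ℂ)) * (ω - 1 / (cc α : ℂ)) /
    (ω * (ζ - (cc α : ℂ)) * (ζ - 1 / (cc α : ℂ)))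

/-- The function `q̃(ω, ζ)` from equation (6.2) of the paper. -/
noncomputable def qtil (α : ℝ) (ω ζ : ℂ) : ℂ :=
  ω * (ζ - (α : ℂ) * (cc α : ℂ)) * (ζ - (α : ℂ) / (cc α : ℂ)) /
    (ζ * (ω - (α : ℂ) * (cc α : ℂ)) * (ω - (α : ℂ) / (cc α : ℂ)))

/-! For `ζ ≠ 1/c` the identity `R₁²c² = 1 - c²` turns the star operation into the Möbius
involution `T z = (z - c)/(c z - 1)`, which swaps `0 ↔ c` and `αc ↔ α/c` and sends `1/c` to `∞`.
For a Möbius map the ratio `(T ω - T x)/(T ζ - T x)` equals `ρ · (ω - x)/(ζ - x)` with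
`ρ = (c ζ - 1)/(c ω - 1)` independent of `x`, and `(T ω - 1/c)/(T ζ - 1/c) = ρ`, while
`(ω - 1/c)/(ζ - 1/c) = ρ⁻¹`. Both `q` and `q̃` are products of such ratios, so after applying `T`
all factors `ρ` cancel and both identities follow. -/

section StarMap

variable {K : Type*} [Field K] (c : K) {a b w x z : K}

def starMap (z : K) : K := (z - c) / (c * z - 1)

theorem starMap_zero : starMap c 0 = c := by simp [starMap]

theorem starMap_self : starMap c c = 0 := by simp [starMap]

theorem starMap_eq_of_add_eq (ha : c * a ≠ 1) (h : a + b = c * (1 + a * b)) :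
    starMap c a = b := by
  rw [starMap, div_eq_iff (sub_ne_zero.mpr ha)]
  linear_combination h

variable {c}

theorem starMap_sub_starMap (hz : c * z ≠ 1) (hx : c * x ≠ 1) :
    starMap c z - starMap c x = (c ^ 2 - 1) * (z - x) / ((c * z - 1) * (c * x - 1)) := by
  rw [starMap, starMap, div_sub_div _ _ (sub_ne_zero.mpr hz) (sub_ne_zero.mpr hx)]
  ring

theorem starMap_sub_div_starMap_sub (hc : c ^ 2 ≠ 1) (hz : c * z ≠ 1) (hw : c * w ≠ 1)
    (hx : c * x ≠ 1) :
    (starMap c z - starMap c x) / (starMap c w - starMap c x) =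
      (c * w - 1) / (c * z - 1) * ((z - x) / (w - x)) := by
  have hc' : c ^ 2 - 1 ≠ 0 := sub_ne_zero.mpr hc
  have hx' : c * x - 1 ≠ 0 := sub_ne_zero.mpr hx
  rw [starMap_sub_starMap hz hx, starMap_sub_starMap hw hx]
  field_simp

theorem starMap_sub_inv (hc0 : c ≠ 0) (hz : c * z ≠ 1) :
    starMap c z - 1 / c = (1 - c ^ 2) / (c * (c * z - 1)) := by
  rw [starMap, div_sub_div _ _ (sub_ne_zero.mpr hz) hc0, mul_comm c]
  ring

theorem starMap_sub_inv_div (hc0 : c ≠ 0) (hc : c ^ 2 ≠ 1) (hz : c * z ≠ 1) (hw : c * w ≠ 1) :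
    (starMap c z - 1 / c) / (starMap c w - 1 / c) = (c * w - 1) / (c * z - 1) := by
  have hc' : 1 - c ^ 2 ≠ 0 := sub_ne_zero.mpr hc.symm
  rw [starMap_sub_inv hc0 hz, starMap_sub_inv hc0 hw, div_div_div_cancel_left' _ _ hc',
    mul_div_mul_left _ _ hc0]

theorem sub_inv_div_sub_inv (hc0 : c ≠ 0) :
    (z - 1 / c) / (w - 1 / c) = (c * z - 1) / (c * w - 1) := by
  rw [← mul_div_mul_left _ _ hc0, mul_sub, mul_sub, mul_one_div_cancel hc0]

end StarMap

theorem qfun_eq_ratios (α : ℝ) (ω ζ : ℂ) :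
    qfun α ω ζ = (ω - cc α) / (ζ - cc α) * ((ω - 1 / cc α) / (ζ - 1 / cc α)) / (ω / ζ) := by
  simp only [qfun, div_eq_mul_inv, mul_inv, inv_inv]
  ring

theorem qtil_eq_ratios (α : ℝ) (ω ζ : ℂ) :
    qtil α ω ζ = ω / ζ / ((ω - α * cc α) / (ζ - α * cc α) * ((ω - α / cc α) / (ζ - α / cc α))) := by
  simp only [qtil, div_eq_mul_inv, mul_inv, inv_inv]
  ring

section Parameters

variable {α : ℝ}

theorem cc_pos (hα : 0 < α) : 0 < cc α :=
  Real.sqrt_pos.mpr (div_pos hα (by nlinarith))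

theorem cc_sq_mul (hα : 0 < α) : cc α ^ 2 * (1 - α + α ^ 2) = α := by
  have : 0 < 1 - α + α ^ 2 := by nlinarith
  rw [cc, Real.sq_sqrt (by positivity)]
  field_simp

theorem R1_sq_mul_cc_sq (hα : 0 < α) : R1 α ^ 2 * cc α ^ 2 = 1 - cc α ^ 2 := by
  have : 0 < 1 - α + α ^ 2 := by nlinarith
  rw [R1, cc, div_pow, Real.sq_sqrt hα.le, Real.sq_sqrt (by positivity)]
  field_simp
  ring

theorem cc_sq_ne_one (hα : 0 < α) (hα1 : α ≠ 1) : cc α ^ 2 ≠ 1 := by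
  intro h
  have := cc_sq_mul hα
  rw [h] at this
  exact hα1 (by nlinarith)

theorem cc_ne_zero (hα : 0 < α) : (cc α : ℂ) ≠ 0 := by exact_mod_cast (cc_pos hα).ne'

theorem star_eq_starMap (hα : 0 < α) {ζ : ℂ} (hζ : ζ ≠ 1 / cc α) :
    star α ζ = starMap (cc α : ℂ) ζ := by
  have hc0 := cc_ne_zero hα
  have hR : (R1 α : ℂ) ^ 2 * (cc α : ℂ) ^ 2 = 1 - (cc α : ℂ) ^ 2 := by
    exact_mod_cast congrArg Complex.ofReal (R1_sq_mul_cc_sq hα)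
  have hB : (cc α : ℂ) * ζ - 1 ≠ 0 :=
    sub_ne_zero.mpr fun h ↦ hζ (eq_one_div_of_mul_eq_one_right h)
  rw [_root_.star, starMap]
  field_simp
  linear_combination hR

theorem cc_mul_alpha_mul_cc_ne_one (hα : 0 < α) (hα1 : α ≠ 1) :
    (cc α : ℂ) * (α * cc α) ≠ 1 := by
  have h := cc_sq_mul hα
  have : α * cc α ^ 2 ≠ 1 := fun h' ↦ hα1 (by nlinarith)
  have hcast : (cc α : ℂ) * (α * cc α) = ((α * cc α ^ 2 : ℝ) : ℂ) := by push_cast; ring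
  rw [hcast]
  exact_mod_cast this

theorem cc_mul_alpha_div_cc_ne_one (hα : 0 < α) (hα1 : α ≠ 1) :
    (cc α : ℂ) * (α / cc α) ≠ 1 := by
  rw [mul_div_cancel₀ _ (cc_ne_zero hα)]
  exact_mod_cast hα1

theorem alpha_mul_cc_add_alpha_div_cc (hα : 0 < α) :
    α * cc α + α / cc α = (cc α : ℂ) * (1 + α * cc α * (α / cc α)) := by
  have hc0 := cc_ne_zero hα
  have h : (cc α : ℂ) ^ 2 * (1 - α + α ^ 2) = α := by exact_mod_cast cc_sq_mul hα
  field_simp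
  linear_combination -h

theorem starMap_alpha_mul_cc (hα : 0 < α) (hα1 : α ≠ 1) :
    starMap (cc α : ℂ) (α * cc α) = α / cc α :=
  starMap_eq_of_add_eq _ (cc_mul_alpha_mul_cc_ne_one hα hα1) (alpha_mul_cc_add_alpha_div_cc hα)

theorem starMap_alpha_div_cc (hα : 0 < α) (hα1 : α ≠ 1) :
    starMap (cc α : ℂ) (α / cc α) = α * cc α := by
  refine starMap_eq_of_add_eq _ (cc_mul_alpha_div_cc_ne_one hα hα1) ?_
  rw [add_comm, mul_comm (α / cc α : ℂ)]
  exact alpha_mul_cc_add_alpha_div_cc hα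

end Parameters

theorem q_qtil_star_symmetry_general (α : ℝ) (hα0 : 0 < α) (hα1 : α < 1) (ω ζ : ℂ)
    (hω : ω ∉ ({0, (α : ℂ) * (cc α : ℂ), (α : ℂ) / (cc α : ℂ), ((cc α : ℂ)),
        1 / (cc α : ℂ)} : Set ℂ))
    (hζ : ζ ∉ ({0, (α : ℂ) * (cc α : ℂ), (α : ℂ) / (cc α : ℂ), ((cc α : ℂ)),
        1 / (cc α : ℂ)} : Set ℂ)) :
    qfun α (star α ω) (star α ζ) * qfun α ω ζ = 1 ∧
    qtil α (star α ω) (star α ζ) = qfun α ω ζ * qtil α ω ζ := by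
  simp only [Set.mem_insert_iff, Set.mem_singleton_iff, not_or] at hω hζ
  obtain ⟨hω0, -, -, hωc, hωp⟩ := hω
  obtain ⟨hζ0, -, -, hζc, hζp⟩ := hζ
  have hc0 := cc_ne_zero hα0
  have hc1 : (cc α : ℂ) ^ 2 ≠ 1 := by exact_mod_cast cc_sq_ne_one hα0 hα1.ne
  have hωp' : (cc α : ℂ) * ω ≠ 1 := fun h ↦ hωp (eq_one_div_of_mul_eq_one_right h)
  have hζp' : (cc α : ℂ) * ζ ≠ 1 := fun h ↦ hζp (eq_one_div_of_mul_eq_one_right h)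
  have ratio x (hx : (cc α : ℂ) * x ≠ 1) := starMap_sub_div_starMap_sub hc1 hωp' hζp' hx
  have h0 := ratio 0 (by simp)
  have hc := ratio (cc α) (by rwa [← sq])
  have ha := ratio _ (cc_mul_alpha_mul_cc_ne_one hα0 hα1.ne)
  have hb := ratio _ (cc_mul_alpha_div_cc_ne_one hα0 hα1.ne)
  rw [starMap_zero, sub_zero, sub_zero] at h0
  rw [starMap_self, sub_zero, sub_zero] at hc
  rw [starMap_alpha_mul_cc hα0 hα1.ne] at ha
  rw [starMap_alpha_div_cc hα0 hα1.ne] at hb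
  rw [star_eq_starMap hα0 hωp, star_eq_starMap hα0 hζp, qfun_eq_ratios, qfun_eq_ratios, qtil_eq_ratios, qtil_eq_ratios,
    h0, hc, ha, hb, starMap_sub_inv_div hc0 hc1 hωp' hζp', sub_inv_div_sub_inv hc0]
  have : ω / ζ ≠ 0 := div_ne_zero hω0 hζ0
  have : (ω - cc α) / (ζ - cc α) ≠ 0 := div_ne_zero (sub_ne_zero.mpr hωc) (sub_ne_zero.mpr hζc)
  have : ((cc α : ℂ) * ζ - 1) / ((cc α : ℂ) * ω - 1) ≠ 0 :=
    div_ne_zero (sub_ne_zero.mpr hζp') (sub_ne_zero.mpr hωp')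
  constructor <;> field_simp

/-- Symmetries of `q` and `q̃` under the star operation. -/
theorem q_qtil_star_symmetry (α : ℝ) (hα0 : 0 < α) (hα1 : α < 1) (ω ζ : ℂ)
    (hω : ω ∉ ({0, (α : ℂ) * (cc α : ℂ), (α : ℂ) / (cc α : ℂ), ((cc α : ℂ)),
        1 / (cc α : ℂ)} : Set ℂ))
    (hζ : ζ ∉ ({0, (α : ℂ) * (cc α : ℂ), (α : ℂ) / (cc α : ℂ), ((cc α : ℂ)),
        1 / (cc α : ℂ)} : Set ℂ))
    (hωs : star α ω ∉ ({0, (α : ℂ) * (cc α : ℂ), (α : ℂ) / (cc α : ℂ),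
        ((cc α : ℂ))} : Set ℂ))
    (hζs : star α ζ ∉ ({0, (α : ℂ) * (cc α : ℂ), (α : ℂ) / (cc α : ℂ),
        ((cc α : ℂ))} : Set ℂ)) :
    qfun α (star α ω) (star α ζ) * qfun α ω ζ = 1 ∧
    qtil α (star α ω) (star α ζ) = qfun α ω ζ * qtil α ω ζ :=
  q_qtil_star_symmetry_general α hα0 hα1 ω ζ hω hζ
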